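/- Let γ_{jR}, γ_{jL}, γ_{lR}, γ_{lL} ≥ 0, τ_j, τ_l ∈ ℝ, t ∈ ℝ, Δt > 0, and let 1_I be the indicator function of I = [t, t+Δt]. With C_j = C[γ_{jR},τ_j], C_l = C[γ_{lR},τ_l], D_j = D[γ_{jL},τ_j], D_l = D[γ_{lL},τ_l], one has ⟨C_j 1_I, C_l 1_I⟩ = √(γ_{jR}γ_{lR})·max(Δt − |τ_j − τ_l|, 0) and ⟨D_j 1_I, D_l 1_I⟩ = √(γ_{jL}γ_{lL})·max(Δt − |τ_j − τ_l|, 0). In particular, for j = l these equal γ_{jR}·Δt and γ_{jL}·Δt respectively, and they vanish when |τ_j − τ_l| > Δt. (This is the rigorous form of the paper's Theorem 2, the non-Markovian Itô rules dC_in^{(j)}·dC_in^{(l)†} and dD_in^{(j)}·dD_in^{(l)†} for atoms coupled to an infinite waveguide.) -/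

import Mathlib

/-!
Each channel applied to `1_[t, t+Δt]` is `√γ` times the indicator of a translate of `[t, t+Δt]`,
so the pairing is `√γ₁ √γ₂` times the length of the overlap of two translates of an interval of
length `Δt` by `τ₁` and `τ₂`, which is `max (Δt - |τ₁ - τ₂|) 0`. Since `D[γ,τ] = C[γ,-τ]`, the
left-propagating case reduces to the right-propagating one.
-/

open MeasureTheory ComplexConjugate

/-- The L² pairing ⟨f,g⟩ = ∫ conj(f t) · g t dt. -/
noncomputable def pairL2 (f g : ℝ → ℂ) : ℂ := ∫ t : ℝ, conj (f t) * g t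

/-- Smeared right-propagating channel of an infinite waveguide:
`(C[γ,τ] f)(t) = √γ·f(t+τ)`. -/
noncomputable def Cchan (γ τ : ℝ) (f : ℝ → ℂ) : ℝ → ℂ :=
  fun t => (Real.sqrt γ : ℂ) * f (t + τ)

/-- Smeared left-propagating channel of an infinite waveguide:
`(D[γ,τ] f)(t) = √γ·f(t−τ)`. -/
noncomputable def Dchan (γ τ : ℝ) (f : ℝ → ℂ) : ℝ → ℂ :=
  fun t => (Real.sqrt γ : ℂ) * f (t - τ)

open Set

lemma pairL2_Cchan (γ₁ γ₂ τ₁ τ₂ : ℝ) (f g : ℝ → ℂ) :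
    pairL2 (Cchan γ₁ τ₁ f) (Cchan γ₂ τ₂ g) =
      ((√γ₁ * √γ₂ : ℝ) : ℂ) * pairL2 (fun x => f (x + τ₁)) (fun x => g (x + τ₂)) := by
  rw [pairL2, pairL2, ← integral_const_mul]
  congr 1 with x
  simp only [Cchan, map_mul, Complex.conj_ofReal]
  push_cast
  ring

lemma Dchan_eq_Cchan_neg (γ τ : ℝ) (f : ℝ → ℂ) : Dchan γ τ f = Cchan γ (-τ) f := by
  funext x
  simp [Dchan, Cchan, sub_eq_add_neg]

lemma pairL2_indicator_one {s u : Set ℝ} (hs : MeasurableSet s) (hu : MeasurableSet u) :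
    pairL2 (s.indicator fun _ => (1 : ℂ)) (u.indicator fun _ => (1 : ℂ)) =
      (volume.real (s ∩ u) : ℂ) := by
  have hprod : ∀ x, conj (s.indicator (fun _ => (1 : ℂ)) x) * u.indicator (fun _ => (1 : ℂ)) x =
      (s ∩ u).indicator (fun _ => (1 : ℂ)) x := by
    intro x
    by_cases hxs : x ∈ s <;> by_cases hxu : x ∈ u <;> simp [hxs, hxu]
  simp only [pairL2, hprod, integral_indicator_const _ (hs.inter hu), Complex.real_smul, mul_one]

lemma indicator_Icc_comp_add_const (a b τ : ℝ) (c : ℂ) :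
    (fun x => (Icc a b).indicator (fun _ => c) (x + τ)) =
      (Icc (a - τ) (b - τ)).indicator fun _ => c := by
  funext x
  rw [← preimage_add_const_Icc]
  rfl

lemma volume_real_Icc_inter_Icc_translate (a ℓ τ₁ τ₂ : ℝ) :
    volume.real (Icc (a - τ₁) (a + ℓ - τ₁) ∩ Icc (a - τ₂) (a + ℓ - τ₂)) =
      max (ℓ - |τ₁ - τ₂|) 0 := by
  rw [Icc_inter_Icc, Real.volume_real_Icc]
  congr 1
  rcases le_total τ₁ τ₂ with h | h
  · rw [abs_of_nonpos (by linarith), min_eq_right (by linarith), max_eq_left (by linarith)]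
    ring
  · rw [abs_of_nonneg (by linarith), min_eq_left (by linarith), max_eq_right (by linarith)]
    ring

lemma pairL2_Cchan_indicator_Icc {γ₁ : ℝ} (hγ₁ : 0 ≤ γ₁) (γ₂ τ₁ τ₂ t Δt : ℝ) :
    pairL2 (Cchan γ₁ τ₁ ((Icc t (t + Δt)).indicator fun _ => (1 : ℂ)))
        (Cchan γ₂ τ₂ ((Icc t (t + Δt)).indicator fun _ => (1 : ℂ))) =
      ((√(γ₁ * γ₂) * max (Δt - |τ₁ - τ₂|) 0 : ℝ) : ℂ) := by
  rw [pairL2_Cchan, indicator_Icc_comp_add_const, indicator_Icc_comp_add_const,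
    pairL2_indicator_one measurableSet_Icc measurableSet_Icc,
    volume_real_Icc_inter_Icc_translate, Real.sqrt_mul hγ₁, ← Complex.ofReal_mul]

lemma pairL2_Dchan_indicator_Icc {γ₁ : ℝ} (hγ₁ : 0 ≤ γ₁) (γ₂ τ₁ τ₂ t Δt : ℝ) :
    pairL2 (Dchan γ₁ τ₁ ((Icc t (t + Δt)).indicator fun _ => (1 : ℂ)))
        (Dchan γ₂ τ₂ ((Icc t (t + Δt)).indicator fun _ => (1 : ℂ))) =
      ((√(γ₁ * γ₂) * max (Δt - |τ₁ - τ₂|) 0 : ℝ) : ℂ) := by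
  rw [Dchan_eq_Cchan_neg, Dchan_eq_Cchan_neg, pairL2_Cchan_indicator_Icc hγ₁, neg_sub_neg,
    abs_sub_comm]

lemma sqrt_mul_self_mul_max_sub_abs_sub_self {γ Δt : ℝ} (hγ : 0 ≤ γ) (hΔt : 0 ≤ Δt) (τ : ℝ) :
    √(γ * γ) * max (Δt - |τ - τ|) 0 = γ * Δt := by
  rw [Real.sqrt_mul_self hγ, sub_self, abs_zero, sub_zero, max_eq_left hΔt]

theorem stmt_9_general (γjR γjL γlR γlL : ℝ)
    (hjR : 0 ≤ γjR) (hjL : 0 ≤ γjL)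
    (τj τl t Δt : ℝ) (hΔt : 0 < Δt) :
    pairL2 (Cchan γjR τj (Set.indicator (Set.Icc t (t + Δt)) fun _ => (1 : ℂ)))
           (Cchan γlR τl (Set.indicator (Set.Icc t (t + Δt)) fun _ => (1 : ℂ))) =
      ((Real.sqrt (γjR * γlR) * max (Δt - |τj - τl|) 0 : ℝ) : ℂ) ∧
    pairL2 (Dchan γjL τj (Set.indicator (Set.Icc t (t + Δt)) fun _ => (1 : ℂ)))
           (Dchan γlL τl (Set.indicator (Set.Icc t (t + Δt)) fun _ => (1 : ℂ))) =
      ((Real.sqrt (γjL * γlL) * max (Δt - |τj - τl|) 0 : ℝ) : ℂ) ∧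
    pairL2 (Cchan γjR τj (Set.indicator (Set.Icc t (t + Δt)) fun _ => (1 : ℂ)))
           (Cchan γjR τj (Set.indicator (Set.Icc t (t + Δt)) fun _ => (1 : ℂ))) =
      ((γjR * Δt : ℝ) : ℂ) ∧
    pairL2 (Dchan γjL τj (Set.indicator (Set.Icc t (t + Δt)) fun _ => (1 : ℂ)))
           (Dchan γjL τj (Set.indicator (Set.Icc t (t + Δt)) fun _ => (1 : ℂ))) =
      ((γjL * Δt : ℝ) : ℂ) ∧
    (|τj - τl| > Δt →
      pairL2 (Cchan γjR τj (Set.indicator (Set.Icc t (t + Δt)) fun _ => (1 : ℂ)))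
             (Cchan γlR τl (Set.indicator (Set.Icc t (t + Δt)) fun _ => (1 : ℂ))) = 0 ∧
      pairL2 (Dchan γjL τj (Set.indicator (Set.Icc t (t + Δt)) fun _ => (1 : ℂ)))
             (Dchan γlL τl (Set.indicator (Set.Icc t (t + Δt)) fun _ => (1 : ℂ))) = 0) := by
  refine ⟨pairL2_Cchan_indicator_Icc hjR .., pairL2_Dchan_indicator_Icc hjL .., ?_, ?_, ?_⟩
  · rw [pairL2_Cchan_indicator_Icc hjR, sqrt_mul_self_mul_max_sub_abs_sub_self hjR hΔt.le]
  · rw [pairL2_Dchan_indicator_Icc hjL, sqrt_mul_self_mul_max_sub_abs_sub_self hjL hΔt.le]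
  · intro hfar
    have hmax : max (Δt - |τj - τl|) 0 = 0 := max_eq_right (by linarith)
    rw [pairL2_Cchan_indicator_Icc hjR, pairL2_Dchan_indicator_Icc hjL, hmax]
    simp

/-- Theorem 2 (non-Markovian Itô rule, infinite waveguide): pairing the right- and
left-propagating channels against the indicator of `[t, t+Δt]` gives
`√(γ_{jR}γ_{lR})·max(Δt − |τ_j − τ_l|, 0)` and `√(γ_{jL}γ_{lL})·max(Δt − |τ_j − τ_l|, 0)`;
in particular they equal `γ_{jR}·Δt` and `γ_{jL}·Δt` on the diagonal, and vanish when
`|τ_j − τ_l| > Δt`. -/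
theorem stmt_9 (γjR γjL γlR γlL : ℝ)
    (hjR : 0 ≤ γjR) (hjL : 0 ≤ γjL) (hlR : 0 ≤ γlR) (hlL : 0 ≤ γlL)
    (τj τl t Δt : ℝ) (hΔt : 0 < Δt) :
    pairL2 (Cchan γjR τj (Set.indicator (Set.Icc t (t + Δt)) fun _ => (1 : ℂ)))
           (Cchan γlR τl (Set.indicator (Set.Icc t (t + Δt)) fun _ => (1 : ℂ))) =
      ((Real.sqrt (γjR * γlR) * max (Δt - |τj - τl|) 0 : ℝ) : ℂ) ∧
    pairL2 (Dchan γjL τj (Set.indicator (Set.Icc t (t + Δt)) fun _ => (1 : ℂ)))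
           (Dchan γlL τl (Set.indicator (Set.Icc t (t + Δt)) fun _ => (1 : ℂ))) =
      ((Real.sqrt (γjL * γlL) * max (Δt - |τj - τl|) 0 : ℝ) : ℂ) ∧
    pairL2 (Cchan γjR τj (Set.indicator (Set.Icc t (t + Δt)) fun _ => (1 : ℂ)))
           (Cchan γjR τj (Set.indicator (Set.Icc t (t + Δt)) fun _ => (1 : ℂ))) =
      ((γjR * Δt : ℝ) : ℂ) ∧
    pairL2 (Dchan γjL τj (Set.indicator (Set.Icc t (t + Δt)) fun _ => (1 : ℂ)))
           (Dchan γjL τj (Set.indicator (Set.Icc t (t + Δt)) fun _ => (1 : ℂ))) =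
      ((γjL * Δt : ℝ) : ℂ) ∧
    (|τj - τl| > Δt →
      pairL2 (Cchan γjR τj (Set.indicator (Set.Icc t (t + Δt)) fun _ => (1 : ℂ)))
             (Cchan γlR τl (Set.indicator (Set.Icc t (t + Δt)) fun _ => (1 : ℂ))) = 0 ∧
      pairL2 (Dchan γjL τj (Set.indicator (Set.Icc t (t + Δt)) fun _ => (1 : ℂ)))
             (Dchan γlL τl (Set.indicator (Set.Icc t (t + Δt)) fun _ => (1 : ℂ))) = 0) :=
  stmt_9_general γjR γjL γlR γlL hjR hjL τj τl t Δt hΔt
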